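/- Let L₀, …, L_{n−1} (indices mod n) be lines in ℍ² with Lᵢ ⊕ L_{i+1} = ℍ² for all i, and let n ≥ 3 be odd. Then the ℍ-linear endomorphism A = Q_{n−1} ∘ Q_{n−3} ∘ ⋯ ∘ Q₂ ∘ Q₀ of ℍ² satisfies: A vanishes on L₀, the image of A is contained in L₀, A restricted to L₁ is injective (so A ≠ 0), and A ∘ A = 0; in particular A is a nonzero nilpotent endomorphism. (This endomorphism is the leading coefficient H_max of the polynomial holonomy H(λ) of a closed polygon of odd length; its nilpotency is established in the proof of Theorem 6.1 on the spectral curve of a closed polygon in S⁴.) -/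

import Mathlib

noncomputable section

/-- The quaternions. -/
abbrev H : Type := Quaternion ℝ

/-- `ℍ²`, pairs of quaternions, regarded as a right `ℍ`-module
(i.e. a module over the opposite ring `ℍᵐᵒᵖ`). -/
abbrev H2 : Type := Fin 2 → H

/-- A line in `ℍ²`: a one-dimensional right `ℍ`-submodule. -/
def IsLine (L : Submodule Hᵐᵒᵖ H2) : Prop :=
  ∃ v : H2, v ≠ 0 ∧ L = Submodule.span Hᵐᵒᵖ {v}

/-- `Q_{n-1} ∘ Q_{n-3} ∘ ⋯ ∘ Q₂ ∘ Q₀` (for `n` odd): the composition of the projections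
`Q` at the even indices `0, 2, …, n-1`. -/
def Hmax (n : ℕ) (Q : ZMod n → (H2 →ₗ[Hᵐᵒᵖ] H2)) : H2 →ₗ[Hᵐᵒᵖ] H2 :=
  (List.range ((n + 1) / 2)).foldl (fun A k => Q ((2 * k : ℕ) : ZMod n) ∘ₗ A) LinearMap.id

/-!
Each `Qᵢ` is the projection onto `L_{i+1}` with kernel `Lᵢ`. Along the chain
`Q_{2k} ∘ ⋯ ∘ Q₀`, the image after `Q_{2k}` lies in `L_{2k+1}`, and `Q_{2k+2}` has kernel
`L_{2k+2}`, which meets `L_{2k+1}` only in `0`; so no nonzero vector of `L₁` (which `Q₀` maps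
injectively) is ever killed. For odd `n = 2m + 1` the last factor is `Q_{2m}`, with image in
`L_{2m+1} = L₀`, while the first factor `Q₀` kills `L₀`: hence `H_max² = 0`.
-/

open LinearMap

section Chain

variable {R M : Type*} [Ring R] [AddCommGroup M] [Module R M]

theorem ker_eq_of_add_eq_self {U W : Submodule R M} (hUW : Disjoint U W) {p q : M →ₗ[R] M}
    (hp : ∀ v, p v ∈ U) (hq : ∀ v, q v ∈ W) (hpq : ∀ v, p v + q v = v) : ker q = U := by
  ext v
  constructor
  · intro hv
    rw [← hpq v, mem_ker.1 hv, add_zero]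
    exact hp v
  · intro hv
    have hqU : q v ∈ U := by
      rw [← add_sub_cancel_left (p v) (q v), hpq v]
      exact U.sub_mem hv (hp v)
    exact Submodule.disjoint_def.1 hUW _ hqU (hq v)

def evenComp (Q : ℕ → M →ₗ[R] M) (k : ℕ) : M →ₗ[R] M :=
  (List.range k).foldl (fun A j => Q (2 * j) ∘ₗ A) LinearMap.id

variable {L : ℕ → Submodule R M} {Q : ℕ → M →ₗ[R] M}

theorem evenComp_succ (k : ℕ) : evenComp Q (k + 1) = Q (2 * k) ∘ₗ evenComp Q k := by
  simp [evenComp, List.range_succ]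

theorem evenComp_succ_apply_mem (hQ : ∀ i v, Q i v ∈ L (i + 1)) (k : ℕ) (v : M) :
    evenComp Q (k + 1) v ∈ L (2 * k + 1) := by
  rw [evenComp_succ]
  exact hQ _ _

theorem le_ker_evenComp_succ (h0 : L 0 ≤ ker (Q 0)) (k : ℕ) :
    L 0 ≤ ker (evenComp Q (k + 1)) := by
  induction k with
  | zero => simpa [evenComp] using h0
  | succ k ih =>
    intro v hv
    rw [mem_ker, evenComp_succ, comp_apply, mem_ker.1 (ih hv), map_zero]

theorem disjoint_ker_evenComp_succ (hdisj : ∀ i, Disjoint (L i) (L (i + 1)))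
    (hQ : ∀ i v, Q i v ∈ L (i + 1)) (hker : ∀ i, ker (Q i) ≤ L i) (k : ℕ) :
    Disjoint (L 1) (ker (evenComp Q (k + 1))) := by
  rw [Submodule.disjoint_def]
  induction k with
  | zero =>
    intro v hv1 hv
    have hv0 : v ∈ L 0 := hker 0 (by simpa [evenComp] using hv)
    exact Submodule.disjoint_def.1 (hdisj 0) v hv0 hv1
  | succ k ih =>
    intro v hv1 hv
    rw [mem_ker, evenComp_succ, comp_apply] at hv
    have hw : evenComp Q (k + 1) v ∈ L (2 * k + 1 + 1) := hker _ hv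
    exact ih v hv1 (Submodule.disjoint_def.1 (hdisj _) _ (evenComp_succ_apply_mem hQ k v) hw)

end Chain

theorem Hmax_nilpotent_of_odd_general
    (n : ℕ) (hodd : Odd n)
    (L : ZMod n → Submodule Hᵐᵒᵖ H2)
    (hline : ∀ i, IsLine (L i))
    (hcompl : ∀ i, IsCompl (L i) (L (i + 1)))
    (P Q : ZMod n → (H2 →ₗ[Hᵐᵒᵖ] H2))
    (hP : ∀ i v, P i v ∈ L i) (hQ : ∀ i v, Q i v ∈ L (i + 1))
    (hPQ : ∀ i v, P i v + Q i v = v) :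
    (∀ v ∈ L 0, Hmax n Q v = 0) ∧
    (∀ v : H2, Hmax n Q v ∈ L 0) ∧
    Set.InjOn (Hmax n Q) (L 1 : Set H2) ∧
    Hmax n Q ≠ 0 ∧
    Hmax n Q ∘ₗ Hmax n Q = 0 := by
  obtain ⟨m, rfl⟩ := hodd
  have hker (i : ℕ) : ker (Q i) = L i :=
    ker_eq_of_add_eq_self (hcompl i).disjoint (hP i) (hQ i) (hPQ i)
  have hQ' (i : ℕ) (v : H2) : Q i v ∈ L ((i + 1 : ℕ) : ZMod (2 * m + 1)) := by
    simpa using hQ i v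
  have hHmax : Hmax (2 * m + 1) Q = evenComp (fun i : ℕ => Q i) (m + 1) := by
    unfold Hmax
    rw [show (2 * m + 1 + 1) / 2 = m + 1 by omega]
    rfl
  have hkill : L 0 ≤ ker (Hmax (2 * m + 1) Q) :=
    hHmax ▸ le_ker_evenComp_succ (L := fun i : ℕ => L i) (by simpa using (hker 0).ge) m
  have himg (v : H2) : Hmax (2 * m + 1) Q v ∈ L 0 := by
    simpa [hHmax] using evenComp_succ_apply_mem (L := fun i : ℕ => L i) hQ' m v
  have hinj : Set.InjOn (Hmax (2 * m + 1) Q) (L 1 : Set H2) := by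
    refine disjoint_ker_iff_injOn.1 ?_
    simpa [hHmax] using disjoint_ker_evenComp_succ (L := fun i : ℕ => L i)
      (fun i => by simpa using (hcompl i).disjoint) hQ' (fun i => (hker i).le) m
  refine ⟨fun v hv => hkill hv, himg, hinj, ?_, range_le_ker_iff.1 ?_⟩
  · obtain ⟨w, hw0, hL1⟩ := hline 1
    have hw : w ∈ L 1 := hL1 ▸ Submodule.mem_span_singleton_self w
    intro h
    exact hw0 (hinj hw (L 1).zero_mem (by simp [h]))
  · rintro _ ⟨v, rfl⟩
    exact hkill (himg v)

/-- The leading coefficient `H_max = Q_{n-1} ∘ ⋯ ∘ Q₂ ∘ Q₀` of the polynomial holonomy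
of a closed polygon of odd length vanishes on `L₀`, has image in `L₀`, is injective on
`L₁` (hence nonzero), and squares to zero; in particular it is a nonzero nilpotent
endomorphism (proof of Theorem 6.1). -/
theorem Hmax_nilpotent_of_odd
    (n : ℕ) (hn : 3 ≤ n) (hodd : Odd n)
    (L : ZMod n → Submodule Hᵐᵒᵖ H2)
    (hline : ∀ i, IsLine (L i))
    (hcompl : ∀ i, IsCompl (L i) (L (i + 1)))
    (P Q : ZMod n → (H2 →ₗ[Hᵐᵒᵖ] H2))
    (hP : ∀ i v, P i v ∈ L i) (hQ : ∀ i v, Q i v ∈ L (i + 1))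
    (hPQ : ∀ i v, P i v + Q i v = v) :
    (∀ v ∈ L 0, Hmax n Q v = 0) ∧
    (∀ v : H2, Hmax n Q v ∈ L 0) ∧
    Set.InjOn (Hmax n Q) (L 1 : Set H2) ∧
    Hmax n Q ≠ 0 ∧
    Hmax n Q ∘ₗ Hmax n Q = 0 :=
  Hmax_nilpotent_of_odd_general n hodd L hline hcompl P Q hP hQ hPQ
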